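/- Let m be a positive integer, f : EuclideanSpace ℝ (Fin m) → EuclideanSpace ℝ (Fin m) continuously differentiable, and u : ℝ → EuclideanSpace ℝ (Fin m) differentiable with u'(t) = f(u(t)) for all t ∈ ℝ. Assume there is M ≥ 0 with ‖f(u(t))‖ ≤ M for all t ∈ ℝ. Let v : ℝ → EuclideanSpace ℝ (Fin m) be differentiable with v'(t) = −(f_u(u(t)))ᵀ ·ᵥ v(t) for all t, where f_u(u(t)) is the Jacobian matrix of f at u(t), and suppose v is an adjoint CLV with nonzero exponent: there exist C > 0 and λ ≠ 0 with ‖v(t₁)‖ ≤ C e^{λ(t₂−t₁)} ‖v(t₂)‖ for all t₁, t₂ ∈ ℝ. Then ⟨f(u(t)), v(t)⟩ = 0 for all t ∈ ℝ. (The vector field f is orthogonal to every non-neutral adjoint CLV.) -/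

import Mathlib

/-!
Along the trajectory, `w t = f (u t)` solves the variational equation `w' = J w`, so its pairing
with any solution of the adjoint equation `v' = -Jᵀ v` is constant in time. The CLV bound gives
`‖v s‖ ≤ C e^{-λ s} ‖v 0‖` and `‖f (u s)‖ ≤ M`, so this constant is at most `M C ‖v 0‖ e^{-λ s}`
for every `s`; since `λ ≠ 0`, letting `λ s → ∞` shows that it vanishes.
-/

open Matrix Real
open scoped RealInnerProductSpace

theorem ofLp_apply_eq_mulVec {𝕜 ι κ : Type*} [RCLike 𝕜] [Fintype κ] [DecidableEq κ]
    (L : EuclideanSpace 𝕜 κ →L[𝕜] EuclideanSpace 𝕜 ι) (A : Matrix ι κ 𝕜)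
    (hA : ∀ i j, A i j = L (EuclideanSpace.single j 1) i) (w : EuclideanSpace 𝕜 κ) :
    WithLp.ofLp (L w) = A *ᵥ WithLp.ofLp w := by
  have hL : (L : EuclideanSpace 𝕜 κ →ₗ[𝕜] EuclideanSpace 𝕜 ι) = Matrix.toLpLin 2 2 A :=
    (EuclideanSpace.basisFun κ 𝕜).toBasis.ext fun j => by
      ext i
      simp [Matrix.toLpLin_apply, hA]
  rw [← L.coe_coe, hL, Matrix.ofLp_toLpLin, Matrix.toLin'_apply]

theorem hasDerivAt_inner_tangent_adjoint {ι : Type*} [Fintype ι]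
    {x y : ℝ → EuclideanSpace ℝ ι} {A : Matrix ι ι ℝ} {t : ℝ}
    (hx : HasDerivAt x (WithLp.toLp 2 (A *ᵥ x t)) t)
    (hy : HasDerivAt y (WithLp.toLp 2 (-Aᵀ *ᵥ y t)) t) :
    HasDerivAt (fun s => ⟪x s, y s⟫) 0 t := by
  refine (hx.inner ℝ hy).congr_deriv ?_
  simp only [EuclideanSpace.inner_eq_star_dotProduct, star_trivial, neg_mulVec, neg_dotProduct,
    dotProduct_mulVec, mulVec_transpose, neg_add_cancel]

theorem inner_eq_of_tangent_adjoint {ι : Type*} [Fintype ι]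
    {x y : ℝ → EuclideanSpace ℝ ι} {A : ℝ → Matrix ι ι ℝ}
    (hx : ∀ t, HasDerivAt x (WithLp.toLp 2 (A t *ᵥ x t)) t)
    (hy : ∀ t, HasDerivAt y (WithLp.toLp 2 (-(A t)ᵀ *ᵥ y t)) t) (s t : ℝ) :
    ⟪x s, y s⟫ = ⟪x t, y t⟫ :=
  have hxy t := hasDerivAt_inner_tangent_adjoint (hx t) (hy t)
  is_const_of_deriv_eq_zero (fun t => (hxy t).differentiableAt) (fun t => (hxy t).deriv) s t

theorem eq_zero_of_abs_le_mul_exp {c K : ℝ} (h : ∀ x, |c| ≤ K * exp x) : c = 0 := by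
  have hlim : Filter.Tendsto (fun x => K * exp x) Filter.atBot (nhds 0) := by
    simpa using Real.tendsto_exp_atBot.const_mul K
  exact abs_nonpos_iff.mp (ge_of_tendsto' hlim h)

theorem stmt_6_general (m : ℕ)
    (f : EuclideanSpace ℝ (Fin m) → EuclideanSpace ℝ (Fin m))
    (hf : ContDiff ℝ 1 f)
    (u : ℝ → EuclideanSpace ℝ (Fin m))
    (hu : Differentiable ℝ u)
    (hu' : ∀ t : ℝ, deriv u t = f (u t))
    (M : ℝ) (hbound : ∀ t : ℝ, ‖f (u t)‖ ≤ M)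
    (J : ℝ → Matrix (Fin m) (Fin m) ℝ)
    (hJ : ∀ (t : ℝ) (i j : Fin m),
      J t i j = fderiv ℝ f (u t) (EuclideanSpace.single j (1 : ℝ)) i)
    (v : ℝ → EuclideanSpace ℝ (Fin m))
    (hv : Differentiable ℝ v)
    (hv' : ∀ t : ℝ, deriv v t = (-(J t)ᵀ) *ᵥ (v t))
    (C : ℝ) (lam : ℝ) (hlam : lam ≠ 0)
    (hvCLV : ∀ t₁ t₂ : ℝ, ‖v t₁‖ ≤ C * exp (lam * (t₂ - t₁)) * ‖v t₂‖) :
    ∀ t : ℝ, ⟪f (u t), v t⟫ = 0 := by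
  have hfu_deriv (t : ℝ) : HasDerivAt (fun s => f (u s)) (WithLp.toLp 2 (J t *ᵥ f (u t))) t := by
    have := (hf.differentiable one_ne_zero (u t)).hasFDerivAt.comp_hasDerivAt t (hu t).hasDerivAt
    rwa [hu' t, ← WithLp.toLp_ofLp (x := fderiv ℝ f (u t) (f (u t))),
      ofLp_apply_eq_mulVec _ (J t) (hJ t)] at this
  have hv_deriv (t : ℝ) : HasDerivAt v (WithLp.toLp 2 (-(J t)ᵀ *ᵥ v t)) t := by
    rw [← hv' t, WithLp.toLp_ofLp]
    exact (hv t).hasDerivAt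
  have hM : 0 ≤ M := (norm_nonneg _).trans (hbound 0)
  intro t
  refine eq_zero_of_abs_le_mul_exp (K := M * C * ‖v 0‖) fun x => ?_
  have hs : lam * (0 - -x / lam) = x := by rw [zero_sub, neg_div, neg_neg, mul_div_cancel₀ x hlam]
  calc |⟪f (u t), v t⟫| = |⟪f (u (-x / lam)), v (-x / lam)⟫| := by
        rw [inner_eq_of_tangent_adjoint hfu_deriv hv_deriv t]
    _ ≤ ‖f (u (-x / lam))‖ * ‖v (-x / lam)‖ := abs_real_inner_le_norm _ _
    _ ≤ M * (C * exp (lam * (0 - -x / lam)) * ‖v 0‖) :=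
        mul_le_mul (hbound _) (hvCLV _ 0) (norm_nonneg _) hM
    _ = M * C * ‖v 0‖ * exp x := by rw [hs]; ring

/-- The vector field `f` along a bounded trajectory is orthogonal to every
non-neutral adjoint CLV. The Jacobian matrix of `f` at `u t` has entries
`J t i j = (Df)(u t) (e_j) i`. -/
theorem stmt_6 (m : ℕ) (hm : 0 < m)
    (f : EuclideanSpace ℝ (Fin m) → EuclideanSpace ℝ (Fin m))
    (hf : ContDiff ℝ 1 f)
    (u : ℝ → EuclideanSpace ℝ (Fin m))
    (hu : Differentiable ℝ u)
    (hu' : ∀ t : ℝ, deriv u t = f (u t))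
    (M : ℝ) (hM : 0 ≤ M) (hbound : ∀ t : ℝ, ‖f (u t)‖ ≤ M)
    (J : ℝ → Matrix (Fin m) (Fin m) ℝ)
    (hJ : ∀ (t : ℝ) (i j : Fin m),
      J t i j = fderiv ℝ f (u t) (EuclideanSpace.single j (1 : ℝ)) i)
    (v : ℝ → EuclideanSpace ℝ (Fin m))
    (hv : Differentiable ℝ v)
    (hv' : ∀ t : ℝ, deriv v t = (-(J t)ᵀ) *ᵥ (v t))
    (C : ℝ) (hC : 0 < C) (lam : ℝ) (hlam : lam ≠ 0)
    (hvCLV : ∀ t₁ t₂ : ℝ, ‖v t₁‖ ≤ C * exp (lam * (t₂ - t₁)) * ‖v t₂‖) :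
    ∀ t : ℝ, ⟪f (u t), v t⟫ = 0 :=
  stmt_6_general m f hf u hu hu' M hbound J hJ v hv hv' C lam hlam hvCLV
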